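/- Let M : A ⥤ B be a functor from a discrete category with all M(A) connected, and let D be its pointwise density comonad. If C is a component of X and ξ : X ⟶ D(X) is a D-coalgebra, then C admits a D-coalgebra structure γ : C ⟶ D(C) such that the component inclusion ι_C : C ⟶ X is a coalgebra homomorphism (C, γ) ⟶ (X, ξ). -/

import Mathlib

open CategoryTheory Limits

universe w v

variable {B : Type v} [Category.{w} B]

/-- An object `C` is connected if every morphism from `C` into a coproduct factors
uniquely through one of the coproduct inclusions. -/
def Connected' (C : B) : Prop :=
  ∀ {I : Type w} (f : I → B) (c : Cofan f), IsColimit c →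
    ∀ g : C ⟶ c.pt, ∃! p : Σ i : I, C ⟶ f i, p.2 ≫ c.inj p.1 = g

/-- A category is componental if every object is (isomorphic to) a coproduct of
connected objects and all coproduct inclusions are monomorphisms. -/
def Componental (B : Type v) [Category.{w} B] : Prop :=
  (∀ X : B, ∃ (I : Type w) (f : I → B) (c : Cofan f),
      (∀ i, Connected' (f i)) ∧ Nonempty (IsColimit c) ∧ Nonempty (c.pt ≅ X)) ∧
  (∀ (I : Type w) (f : I → B) (c : Cofan f), Nonempty (IsColimit c) → ∀ i, Mono (c.inj i))

/-!
`ιC ≫ ξ` lands in a single summand of `D(X)`: `ιC ≫ ξ = g ≫ ι_f` with `g : C ⟶ M(A)` and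
`f : M(A) ⟶ X`. The counit gives `g ≫ f = ιC`, so the connected `M(A)` maps into the summand
`C` of `X` by some `f'`, and coassociativity of `ξ` forces `ι_f = f ≫ ξ`. Uniqueness of
factorizations out of connected objects then makes `g` and `f'` mutually inverse, and `γ` is
the coalgebra structure `η_A = ι_𝟙` of `M(A)` carried over to `C` along this isomorphism.
-/

section Connected

variable {C : B} {I : Type w} {f : I → B} {c : Cofan f}

theorem Connected'.sigma_eq_of_comp_inj_eq (hC : Connected' C) (hc : IsColimit c) {i j : I}
    {a : C ⟶ f i} {b : C ⟶ f j} (h : a ≫ c.inj i = b ≫ c.inj j) :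
    (⟨i, a⟩ : Σ i, C ⟶ f i) = ⟨j, b⟩ :=
  (hC f c hc _).unique h rfl

theorem Connected'.cancel_inj (hC : Connected' C) (hc : IsColimit c) {i : I}
    {a b : C ⟶ f i} (h : a ≫ c.inj i = b ≫ c.inj i) : a = b :=
  eq_of_heq (Sigma.mk.inj_iff.mp (hC.sigma_eq_of_comp_inj_eq hc h)).2

/-- `Connected'` only tests coproducts indexed in universe `w`, hence the `ULift`. -/
def cofanOfBinaryCofan {P Q : B} (c : BinaryCofan P Q) :
    Cofan (fun j : ULift.{w} WalkingPair => (pair P Q).obj ⟨j.down⟩) :=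
  Cofan.mk c.pt fun j => c.ι.app ⟨j.down⟩

def isColimitCofanOfBinaryCofan {P Q : B} {c : BinaryCofan P Q} (hc : IsColimit c) :
    IsColimit (cofanOfBinaryCofan.{w} c) :=
  Cofan.IsColimit.mk _
    (fun t => hc.desc (BinaryCofan.mk (t.inj ⟨.left⟩) (t.inj ⟨.right⟩)))
    (fun t ⟨j⟩ => by cases j <;> exact hc.fac _ _)
    (fun t m hm => BinaryCofan.IsColimit.hom_ext hc
      ((hm ⟨.left⟩).trans (hc.fac (BinaryCofan.mk _ _) ⟨.left⟩).symm)
      ((hm ⟨.right⟩).trans (hc.fac (BinaryCofan.mk _ _) ⟨.right⟩).symm))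

variable {P Q X : B} {ιP : P ⟶ X} {ιQ : Q ⟶ X}

theorem Connected'.cancel_inl (hC : Connected' C) (hc : IsColimit (BinaryCofan.mk ιP ιQ))
    {a b : C ⟶ P} (h : a ≫ ιP = b ≫ ιP) : a = b :=
  hC.cancel_inj (i := ⟨.left⟩) (isColimitCofanOfBinaryCofan hc) h

theorem Connected'.comp_inl_ne_comp_inr (hC : Connected' C)
    (hc : IsColimit (BinaryCofan.mk ιP ιQ)) (a : C ⟶ P) (b : C ⟶ Q) : a ≫ ιP ≠ b ≫ ιQ :=
  fun h => by
    simpa using congrArg Sigma.fst (hC.sigma_eq_of_comp_inj_eq (i := ⟨.left⟩) (j := ⟨.right⟩)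
      (isColimitCofanOfBinaryCofan hc) h)

theorem Connected'.exists_comp_inl_or_exists_comp_inr (hC : Connected' C)
    (hc : IsColimit (BinaryCofan.mk ιP ιQ)) (g : C ⟶ X) :
    (∃ a, a ≫ ιP = g) ∨ ∃ b, b ≫ ιQ = g := by
  obtain ⟨⟨⟨_ | _⟩, a⟩, ha, -⟩ := hC _ _ (isColimitCofanOfBinaryCofan hc) g
  exacts [.inl ⟨a, ha⟩, .inr ⟨a, ha⟩]

theorem Connected'.exists_comp_inl_of_comp_eq_inl {Z : B} (hZ : Connected' Z)
    (hP : Connected' P) (hc : IsColimit (BinaryCofan.mk ιP ιQ)) {f : Z ⟶ X} {g : P ⟶ Z}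
    (hgf : g ≫ f = ιP) : ∃ f', f' ≫ ιP = f := by
  refine (hZ.exists_comp_inl_or_exists_comp_inr hc f).resolve_right ?_
  rintro ⟨b, rfl⟩
  exact hP.comp_inl_ne_comp_inr hc (𝟙 P) (g ≫ b) (by rw [Category.id_comp, Category.assoc, hgf])

end Connected

section Coalgebra

variable {D : B ⥤ B} (ε : D ⟶ 𝟭 B) (δ : D ⟶ D ⋙ D)

def IsCoalgebraStr {C : B} (γ : C ⟶ D.obj C) : Prop :=
  γ ≫ ε.app C = 𝟙 C ∧ γ ≫ δ.app C = γ ≫ D.map γ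

variable {ε δ}

theorem IsCoalgebraStr.conj {C Z : B} (e : C ≅ Z) {θ : Z ⟶ D.obj Z}
    (hθ : IsCoalgebraStr ε δ θ) : IsCoalgebraStr ε δ (e.hom ≫ θ ≫ D.map e.inv) := by
  obtain ⟨hθε, hθδ⟩ := hθ
  constructor
  · rw [Category.assoc, Category.assoc, ε.naturality, reassoc_of% hθε]
    simp
  · rw [Category.assoc, Category.assoc, δ.naturality, reassoc_of% hθδ]
    simp only [Category.assoc, Functor.map_comp, Functor.comp_map, Iso.map_inv_hom_id_assoc]

end Coalgebra

namespace DensityComonad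

variable {J : Type w} {M : Discrete J ⥤ B} {D : B ⥤ B}
  {ι : ∀ (A : Discrete J) {X : B}, (M.obj A ⟶ X) → (M.obj A ⟶ D.obj X)}

theorem ι_comp_map (hc : ∀ X : B, IsColimit (Cofan.mk (D.obj X)
      (fun p : Σ A : Discrete J, (M.obj A ⟶ X) => ι p.1 p.2)))
    (hmap : ∀ {X Y : B} (h : X ⟶ Y),
      D.map h = (hc X).desc (Cofan.mk (D.obj Y)
        (fun p : Σ A : Discrete J, (M.obj A ⟶ X) => ι p.1 (p.2 ≫ h))))
    (A : Discrete J) {X Y : B} (f : M.obj A ⟶ X) (h : X ⟶ Y) :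
    ι A f ≫ D.map h = ι A (f ≫ h) := by
  rw [hmap h]
  exact (hc X).fac _ ⟨⟨A, f⟩⟩

variable {ε : D ⟶ 𝟭 B} {δ : D ⟶ D ⋙ D}

theorem ι_comp_counit (hnat : ∀ (A : Discrete J) {X Y : B} (f : M.obj A ⟶ X) (h : X ⟶ Y),
      ι A f ≫ D.map h = ι A (f ≫ h))
    (hε : ∀ A : Discrete J, ι A (𝟙 (M.obj A)) ≫ ε.app (M.obj A) = 𝟙 (M.obj A))
    (A : Discrete J) {X : B} (f : M.obj A ⟶ X) : ι A f ≫ ε.app X = f := by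
  calc ι A f ≫ ε.app X = ι A (𝟙 _) ≫ D.map f ≫ ε.app X := by
        rw [← Category.assoc, hnat, Category.id_comp]
    _ = f := by rw [ε.naturality, reassoc_of% (hε A), Functor.id_map]

theorem ι_comp_comult (hnat : ∀ (A : Discrete J) {X Y : B} (f : M.obj A ⟶ X) (h : X ⟶ Y),
      ι A f ≫ D.map h = ι A (f ≫ h))
    (hδ : ∀ A : Discrete J, ι A (𝟙 (M.obj A)) ≫ δ.app (M.obj A)
        = ι A (𝟙 (M.obj A)) ≫ D.map (ι A (𝟙 (M.obj A))))
    (A : Discrete J) {X : B} (f : M.obj A ⟶ X) : ι A f ≫ δ.app X = ι A (ι A f) := by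
  have hιf : ι A (𝟙 _) ≫ D.map f = ι A f := by rw [hnat, Category.id_comp]
  calc ι A f ≫ δ.app X = ι A (𝟙 _) ≫ D.map (ι A (𝟙 _)) ≫ D.map (D.map f) := by
        rw [← hιf, Category.assoc, δ.naturality, reassoc_of% (hδ A), Functor.comp_map]
    _ = ι A (ι A f) := by rw [← D.map_comp, hιf, hnat, Category.id_comp]

theorem ι_eq_comp_of_coassoc {X : B}
    (hc : IsColimit (Cofan.mk (D.obj (D.obj X))
      (fun p : Σ A : Discrete J, (M.obj A ⟶ D.obj X) => ι p.1 p.2)))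
    (hnat : ∀ (A : Discrete J) {X Y : B} (f : M.obj A ⟶ X) (h : X ⟶ Y),
      ι A f ≫ D.map h = ι A (f ≫ h))
    (hcomult : ∀ (A : Discrete J) {X : B} (f : M.obj A ⟶ X), ι A f ≫ δ.app X = ι A (ι A f))
    {ξ : X ⟶ D.obj X} (hξ : ξ ≫ δ.app X = ξ ≫ D.map ξ) {C : B} (hC : Connected' C)
    {h : C ⟶ X} {A : Discrete J} {f : M.obj A ⟶ X} {g : C ⟶ M.obj A}
    (hfac : g ≫ ι A f = h ≫ ξ) : ι A f = f ≫ ξ := by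
  have hcoassoc : g ≫ ι A (ι A f) = g ≫ ι A (f ≫ ξ) := by
    rw [← hcomult, ← hnat, reassoc_of% hfac, reassoc_of% hfac, hξ]
  have := congrArg Sigma.fst (hC.sigma_eq_of_comp_inj_eq hc (i := ⟨A, ι A f⟩)
    (j := ⟨A, f ≫ ξ⟩) hcoassoc)
  exact eq_of_heq (Sigma.mk.inj_iff.mp this).2

end DensityComonad

open DensityComonad in
theorem stmt_14_general {J : Type w}
    (M : Discrete J ⥤ B) (D : B ⥤ B)
    (ι : ∀ (A : Discrete J) {X : B}, (M.obj A ⟶ X) → (M.obj A ⟶ D.obj X))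
    (hc : ∀ X : B, IsColimit (Cofan.mk (D.obj X)
      (fun p : Σ A : Discrete J, (M.obj A ⟶ X) => ι p.1 p.2)))
    (hmap : ∀ {X Y : B} (h : X ⟶ Y),
      D.map h = (hc X).desc (Cofan.mk (D.obj Y)
        (fun p : Σ A : Discrete J, (M.obj A ⟶ X) => ι p.1 (p.2 ≫ h))))
    (ε : D ⟶ 𝟭 B) (δ : D ⟶ D ⋙ D)
    (hε : ∀ A : Discrete J, ι A (𝟙 (M.obj A)) ≫ ε.app (M.obj A) = 𝟙 (M.obj A))
    (hδ : ∀ A : Discrete J, ι A (𝟙 (M.obj A)) ≫ δ.app (M.obj A)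
        = ι A (𝟙 (M.obj A)) ≫ D.map (ι A (𝟙 (M.obj A))))
    (hconn : ∀ A : Discrete J, Connected' (M.obj A))
    (X C Y : B) (hC : Connected' C) (ιC : C ⟶ X) (ιY : Y ⟶ X)
    (hcomp : Nonempty (IsColimit (BinaryCofan.mk ιC ιY)))
    (ξ : X ⟶ D.obj X)
    (hξ1 : ξ ≫ ε.app X = 𝟙 X)
    (hξ2 : ξ ≫ δ.app X = ξ ≫ D.map ξ) :
    ∃ γ : C ⟶ D.obj C,
      γ ≫ ε.app C = 𝟙 C ∧ γ ≫ δ.app C = γ ≫ D.map γ ∧ ιC ≫ ξ = γ ≫ D.map ιC := by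
  have hnat := ι_comp_map hc hmap
  have hsum := hcomp.some
  obtain ⟨⟨⟨A, f⟩, g⟩, hfac, -⟩ := hC _ _ (hc X) (ιC ≫ ξ)
  change g ≫ ι A f = ιC ≫ ξ at hfac
  have hgf : g ≫ f = ιC := by
    simpa [ι_comp_counit hnat hε, hξ1] using hfac =≫ ε.app X
  obtain ⟨f', hf'⟩ := Connected'.exists_comp_inl_of_comp_eq_inl (hconn A) hC hsum hgf
  have hfξ : ι A f = f ≫ ξ :=
    ι_eq_comp_of_coassoc (hc _) hnat (ι_comp_comult hnat hδ) hξ2 hC hfac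
  let e : C ≅ M.obj A :=
    { hom := g
      inv := f'
      hom_inv_id := hC.cancel_inl hsum (by rw [Category.assoc, hf', hgf, Category.id_comp])
      inv_hom_id := Connected'.cancel_inj (hconn A) (hc X) (i := ⟨A, f⟩)
        (show (f' ≫ g) ≫ ι A f = 𝟙 _ ≫ ι A f by
          rw [Category.assoc, hfac, reassoc_of% hf', ← hfξ, Category.id_comp]) }
  obtain ⟨hγε, hγδ⟩ := IsCoalgebraStr.conj (ε := ε) (δ := δ) e ⟨hε A, hδ A⟩
  refine ⟨_, hγε, hγδ, ?_⟩
  show _ = (g ≫ ι A (𝟙 _) ≫ D.map f') ≫ D.map ιC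
  rw [← hfac, Category.assoc, Category.assoc, ← D.map_comp, hnat, Category.id_comp, hf']

/-- for `M : A ⥤ B` from a discrete category with all `M(A)` connected
and pointwise density comonad `D`, if `C` is a component of `X` (via the component
inclusion `ι_C`) and `ξ : X ⟶ D(X)` is a `D`-coalgebra, then `C` admits a `D`-coalgebra
structure `γ` making `ι_C` a coalgebra homomorphism `(C, γ) ⟶ (X, ξ)`. -/
theorem stmt_14 {J : Type w} [HasCoproducts.{w} B]
    (M : Discrete J ⥤ B) (D : B ⥤ B)
    (ι : ∀ (A : Discrete J) {X : B}, (M.obj A ⟶ X) → (M.obj A ⟶ D.obj X))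
    (hc : ∀ X : B, IsColimit (Cofan.mk (D.obj X)
      (fun p : Σ A : Discrete J, (M.obj A ⟶ X) => ι p.1 p.2)))
    (hmap : ∀ {X Y : B} (h : X ⟶ Y),
      D.map h = (hc X).desc (Cofan.mk (D.obj Y)
        (fun p : Σ A : Discrete J, (M.obj A ⟶ X) => ι p.1 (p.2 ≫ h))))
    (ε : D ⟶ 𝟭 B) (δ : D ⟶ D ⋙ D)
    (hε : ∀ A : Discrete J, ι A (𝟙 (M.obj A)) ≫ ε.app (M.obj A) = 𝟙 (M.obj A))
    (hδ : ∀ A : Discrete J, ι A (𝟙 (M.obj A)) ≫ δ.app (M.obj A)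
        = ι A (𝟙 (M.obj A)) ≫ D.map (ι A (𝟙 (M.obj A))))
    (hB : Componental B)
    (hconn : ∀ A : Discrete J, Connected' (M.obj A))
    (X C Y : B) (hC : Connected' C) (ιC : C ⟶ X) (ιY : Y ⟶ X)
    (hcomp : Nonempty (IsColimit (BinaryCofan.mk ιC ιY)))
    (ξ : X ⟶ D.obj X)
    (hξ1 : ξ ≫ ε.app X = 𝟙 X)
    (hξ2 : ξ ≫ δ.app X = ξ ≫ D.map ξ) :
    ∃ γ : C ⟶ D.obj C,
      γ ≫ ε.app C = 𝟙 C ∧ γ ≫ δ.app C = γ ≫ D.map γ ∧ ιC ≫ ξ = γ ≫ D.map ιC :=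
  stmt_14_general M D ι hc hmap ε δ hε hδ hconn X C Y hC ιC ιY hcomp ξ hξ1 hξ2
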